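/- Fix finite sets and the setup of the main theorem. Suppose the follower's history-based best-response strategy σ̂^f = BR^f(σ̃_{1:t-1}^l σ_t^l σ̃_{t+1:T}^l) satisfies the property that, at every time n ≥ t+1, the continuation game value from the follower's perspective satisfies the backward-recursion value identity (Lemma 1) and strategy-independence (Lemma 3). Then the stage-t prescription-based best-response value coincides with the history-based best-response value: max over prescriptions γ_t^f(·|x_t^f) of E^{γ_t^f(·|x_t^f) γ_t^l, π_t}[ R_t^f(X_t, A_t) + δ V_{t+1}^f(F(π_t, γ_t^l γ̃_t^f, A_t), X_{t+1}^f) | π_t, x_t^f ] equals max over full continuation strategies σ_{t:T}^f of E^{σ̃_{1:t-1}^l σ_t^l σ̃_{t+1:T}^l, σ̂_{1:t-1}^f σ_{t:T}^f}[ Σ_{n=t}^T δ^{n−t} R_n^f(X_n, A_n) | h_t^f ], where π_t(x_t) = P^{σ̃_{1:t-1}^l σ_t^l, σ̂_{1:t}^f}(x_t | a_{1:t-1}). -/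

import Mathlib

/-!
Averaged over the belief `μ_t` and the leader's prescription `γ`, the follower's reward-to-go
from `t` under any strategy `σ` is the one-stage objective of its time-`t` mixed action, with
continuation value the `μ_{t+1}`-average of `σ`'s reward-to-go from `t + 1`; strategy
independence is exactly what lets the belief be updated to `μ_{t+1}` inside the sum. By
sequential optimality of the equilibrium strategy this continuation is at most `V_{t+1}`, with
equality when `σ` plays a prescription `q` at time `t` and the equilibrium strategy afterwards.
So every strategy value is dominated by the prescription value of its time-`t` marginal, every
prescription value is attained by a strategy, and the two suprema agree.
-/

open Finset

noncomputable section

def upd {α : Type} (h : ℕ → α) (t : ℕ) (v : α) : ℕ → α :=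
  fun n => if n = t then v else h n

/-- Discounted follower reward-to-go over `k` remaining stages from time `t` (discount δ). -/
def rtgFd {Xl Xf Al Af : Type} [Fintype Xl] [Fintype Xf] [Fintype Al] [Fintype Af]
    (σl : ℕ → (ℕ → Al × Af) → Xl → Al → ℝ)
    (σf : ℕ → (ℕ → Al × Af) → (ℕ → Xf) → Af → ℝ)
    (Ql : Xl → Al × Af → Xl → ℝ) (Qf : Xf → Al × Af → Xf → ℝ)
    (Rf : ℕ → Xl × Xf → Al × Af → ℝ) (δ : ℝ) :
    ℕ → ℕ → (ℕ → Al × Af) → (ℕ → Xf) → Xl → ℝ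
  | 0, _, _, _, _ => 0
  | k + 1, t, a, xfh, xl =>
      ∑ al : Al, ∑ af : Af, σl t a xl al * σf t a xfh af *
        (Rf t (xl, xfh t) (al, af) +
          δ * ∑ xl' : Xl, ∑ xf' : Xf, Ql xl (al, af) xl' * Qf (xfh t) (al, af) xf' *
            rtgFd σl σf Ql Qf Rf δ k (t + 1) (upd a t (al, af)) (upd xfh (t + 1) xf') xl')

theorem upd_self {α : Type} (h : ℕ → α) (t : ℕ) (v : α) : upd h t v t = v := if_pos rfl

theorem upd_of_ne {α : Type} (h : ℕ → α) {t n : ℕ} (v : α) (hn : n ≠ t) : upd h t v n = h n :=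
  if_neg hn

theorem upd_const_mem_stdSimplex {β γ ι : Type} [Fintype ι] {σ : ℕ → β → γ → ι → ℝ}
    (hσ : ∀ n b c, σ n b c ∈ stdSimplex ℝ ι) {q : ι → ℝ} (hq : q ∈ stdSimplex ℝ ι) (t n : ℕ)
    (b : β) (c : γ) : upd σ t (fun _ _ => q) n b c ∈ stdSimplex ℝ ι := by
  unfold upd
  split_ifs
  exacts [hq, hσ n b c]

section StageObjective

variable {Xl Xf Al Af : Type} [Fintype Xl] [Fintype Xf] [Fintype Al] [Fintype Af]

/-- The one-stage objective `E[R + δ W]` of the prescription problem, `W` being the continuation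
value at the follower's next state. -/
def stageObjective (μ : Xl → ℝ) (γ : Xl → Al → ℝ) (R : Xl → Al × Af → ℝ)
    (P : Al × Af → Xf → ℝ) (δ : ℝ) (W : Al × Af → Xf → ℝ) (q : Af → ℝ) : ℝ :=
  ∑ xl, ∑ al, ∑ af, μ xl * γ xl al * q af *
    (R xl (al, af) + δ * ∑ xf, P (al, af) xf * W (al, af) xf)

theorem stageObjective_eq_sum_actions (μ : Xl → ℝ) (γ : Xl → Al → ℝ) (R : Xl → Al × Af → ℝ)
    (P : Al × Af → Xf → ℝ) (δ : ℝ) (W : Al × Af → Xf → ℝ) (q : Af → ℝ) :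
    stageObjective μ γ R P δ W q =
      ∑ al, ∑ af, q af * (∑ xl, μ xl * γ xl al * R xl (al, af) +
        δ * ∑ xf, P (al, af) xf * ((∑ xl, μ xl * γ xl al) * W (al, af) xf)) := by
  rw [stageObjective, sum_comm_cycle, sum_comm_cycle]
  refine sum_congr rfl fun al _ => sum_congr rfl fun af _ => ?_
  simp only [mul_add, sum_add_distrib, mul_sum, sum_mul]
  congr 1
  · exact sum_congr rfl fun xl _ => by ring
  · rw [sum_comm]
    exact sum_congr rfl fun xf _ => sum_congr rfl fun xl _ => by ring

theorem stageObjective_mono {μ : Xl → ℝ} {γ : Xl → Al → ℝ} {P : Al × Af → Xf → ℝ} {δ : ℝ}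
    {q : Af → ℝ} {W W' : Al × Af → Xf → ℝ} (R : Xl → Al × Af → ℝ) (hμ : ∀ xl, 0 ≤ μ xl)
    (hγ : ∀ xl al, 0 ≤ γ xl al) (hP : ∀ u xf, 0 ≤ P u xf) (hδ : 0 ≤ δ) (hq : ∀ af, 0 ≤ q af)
    (hW : ∀ u xf, W u xf ≤ W' u xf) :
    stageObjective μ γ R P δ W q ≤ stageObjective μ γ R P δ W' q := by
  unfold stageObjective
  gcongr with xl _ al _ af _ xf _
  · exact mul_nonneg (mul_nonneg (hμ xl) (hγ xl al)) (hq af)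
  · exact hP _ xf
  · exact hW _ xf

end StageObjective

section RewardToGo

variable {Xl Xf Al Af : Type} [Fintype Xl] [Fintype Xf] [Fintype Al] [Fintype Af]
  {Ql : Xl → Al × Af → Xl → ℝ} {Qf : Xf → Al × Af → Xf → ℝ}
  {Rf : ℕ → Xl × Xf → Al × Af → ℝ} {δ : ℝ}

theorem rtgFd_congr {σl σl' : ℕ → (ℕ → Al × Af) → Xl → Al → ℝ}
    {σf σf' : ℕ → (ℕ → Al × Af) → (ℕ → Xf) → Af → ℝ} (k : ℕ) {n : ℕ}
    (hl : ∀ m, n ≤ m → σl m = σl' m) (hf : ∀ m, n ≤ m → σf m = σf' m) :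
    rtgFd σl σf Ql Qf Rf δ k n = rtgFd σl' σf' Ql Qf Rf δ k n := by
  induction k generalizing n with
  | zero => rfl
  | succ k ih =>
    funext a xfh xl
    have hcont := ih (n := n + 1) (fun m hm => hl m (by omega)) (fun m hm => hf m (by omega))
    simp only [rtgFd, hl n le_rfl, hf n le_rfl, hcont]

theorem sum_mul_rtgFd_succ (σl : ℕ → (ℕ → Al × Af) → Xl → Al → ℝ)
    (σf : ℕ → (ℕ → Al × Af) → (ℕ → Xf) → Af → ℝ) (μ : Xl → ℝ) (k n : ℕ)
    (a : ℕ → Al × Af) (xfh : ℕ → Xf) :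
    ∑ xl, μ xl * rtgFd σl σf Ql Qf Rf δ (k + 1) n a xfh xl =
      ∑ al, ∑ af, σf n a xfh af *
        (∑ xl, μ xl * σl n a xl al * Rf n (xl, xfh n) (al, af) +
          δ * ∑ xf', Qf (xfh n) (al, af) xf' *
            ∑ xl, ∑ xl', μ xl * σl n a xl al * Ql xl (al, af) xl' *
              rtgFd σl σf Ql Qf Rf δ k (n + 1) (upd a n (al, af)) (upd xfh (n + 1) xf') xl') := by
  simp only [rtgFd, mul_sum, mul_add, sum_add_distrib]
  congr 1
  · rw [sum_comm]
    refine sum_congr rfl fun al _ => ?_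
    rw [sum_comm]
    exact sum_congr rfl fun af _ => sum_congr rfl fun xl _ => by ring
  · rw [sum_comm]
    refine sum_congr rfl fun al _ => ?_
    rw [sum_comm]
    refine sum_congr rfl fun af _ => ?_
    rw [sum_comm_cycle]
    exact sum_congr rfl fun xf' _ => sum_congr rfl fun xl _ => sum_congr rfl fun xl' _ => by ring

theorem sum_mul_rtgFd_upd_eq_stageObjective (σl : ℕ → (ℕ → Al × Af) → Xl → Al → ℝ)
    (γ : Xl → Al → ℝ) (σf : ℕ → (ℕ → Al × Af) → (ℕ → Xf) → Af → ℝ) (μ : Xl → ℝ)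
    (μ' : Al × Af → Xl → ℝ) (k t : ℕ) (a : ℕ → Al × Af) (xfh : ℕ → Xf)
    (hind : ∀ al af xf',
      ∑ xl, ∑ xl', μ xl * γ xl al * Ql xl (al, af) xl' *
          rtgFd σl σf Ql Qf Rf δ k (t + 1) (upd a t (al, af)) (upd xfh (t + 1) xf') xl' =
        (∑ xl, μ xl * γ xl al) * ∑ xl', μ' (al, af) xl' *
          rtgFd σl σf Ql Qf Rf δ k (t + 1) (upd a t (al, af)) (upd xfh (t + 1) xf') xl') :
    ∑ xl, μ xl * rtgFd (upd σl t fun _ => γ) σf Ql Qf Rf δ (k + 1) t a xfh xl =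
      stageObjective μ γ (fun xl u => Rf t (xl, xfh t) u) (Qf (xfh t)) δ
        (fun u xf' => ∑ xl', μ' u xl' *
          rtgFd σl σf Ql Qf Rf δ k (t + 1) (upd a t u) (upd xfh (t + 1) xf') xl')
        (σf t a xfh) := by
  rw [stageObjective_eq_sum_actions, sum_mul_rtgFd_succ,
    rtgFd_congr k (fun m hm => upd_of_ne σl _ (by omega)) fun _ _ => rfl]
  simp only [upd_self, hind]

end RewardToGo

theorem prescription_value_equals_strategy_value_general
    {Xl Xf Al Af : Type} [Fintype Xl] [Fintype Xf] [Fintype Al] [Fintype Af]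
    (T t : ℕ) (ht : t < T)
    (σtl : ℕ → (ℕ → Al × Af) → Xl → Al → ℝ)
    (σtf : ℕ → (ℕ → Al × Af) → (ℕ → Xf) → Af → ℝ)
    (γl : Xl → Al → ℝ)
    (Ql : Xl → Al × Af → Xl → ℝ) (Qf : Xf → Al × Af → Xf → ℝ)
    (Rf : ℕ → Xl × Xf → Al × Af → ℝ) (δ : ℝ) (hδ0 : 0 ≤ δ)
    (μ : ℕ → (ℕ → Al × Af) → Xl → ℝ)
    (V : ℕ → (ℕ → Al × Af) → Xf → ℝ)
    (a : ℕ → Al × Af) (xfh : ℕ → Xf)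
    -- probability hypotheses
    (hμ : ∀ n a', (∀ xl, 0 ≤ μ n a' xl) ∧ ∑ xl, μ n a' xl = 1)
    (hσtf : ∀ n a' xfh', (∀ af, 0 ≤ σtf n a' xfh' af) ∧ ∑ af, σtf n a' xfh' af = 1)
    (hγl : ∀ xl, (∀ al, 0 ≤ γl xl al) ∧ ∑ al, γl xl al = 1)
    (hQf : ∀ x u, (∀ x', 0 ≤ Qf x u x') ∧ ∑ x', Qf x u x' = 1)
    -- Lemma 1: V_{t+1} equals the equilibrium reward-to-go restarted from μ_{t+1}
    (hval : ∀ (a' : ℕ → Al × Af) (xfh' : ℕ → Xf),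
      V (t + 1) a' (xfh' (t + 1))
        = ∑ xl', μ (t + 1) a' xl' *
            rtgFd σtl σtf Ql Qf Rf δ (T - (t + 1)) (t + 1) a' xfh' xl')
    -- Lemma 3: strategy-independence / belief consistency at time t (multiplicative form)
    (hind : ∀ (σf : ℕ → (ℕ → Al × Af) → (ℕ → Xf) → Af → ℝ) (al : Al) (af : Af)
        (xf' : Xf),
      (∑ xl, ∑ xl', μ t a xl * γl xl al * Ql xl (al, af) xl' *
          rtgFd σtl σf Ql Qf Rf δ (T - (t + 1)) (t + 1)
            (upd a t (al, af)) (upd xfh (t + 1) xf') xl')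
        = (∑ xl, μ t a xl * γl xl al) *
          ∑ xl', μ (t + 1) (upd a t (al, af)) xl' *
            rtgFd σtl σf Ql Qf Rf δ (T - (t + 1)) (t + 1)
              (upd a t (al, af)) (upd xfh (t + 1) xf') xl')
    -- the equilibrium follower strategy is optimal from time t+1 on
    (hopt : ∀ (σf : ℕ → (ℕ → Al × Af) → (ℕ → Xf) → Af → ℝ),
      (∀ n a' xfh', (∀ af, 0 ≤ σf n a' xfh' af) ∧ ∑ af, σf n a' xfh' af = 1) →
      ∀ (a' : ℕ → Al × Af) (xfh' : ℕ → Xf),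
        (∑ xl', μ (t + 1) a' xl' *
            rtgFd σtl σf Ql Qf Rf δ (T - (t + 1)) (t + 1) a' xfh' xl')
          ≤ ∑ xl', μ (t + 1) a' xl' *
              rtgFd σtl σtf Ql Qf Rf δ (T - (t + 1)) (t + 1) a' xfh' xl') :
    -- conclusion: the two optima coincide
    sSup {r : ℝ | ∃ q : Af → ℝ, ((∀ af, 0 ≤ q af) ∧ ∑ af, q af = 1) ∧
        r = ∑ xl : Xl, ∑ al : Al, ∑ af : Af,
          μ t a xl * γl xl al * q af *
            (Rf t (xl, xfh t) (al, af) +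
              δ * ∑ xf' : Xf, Qf (xfh t) (al, af) xf' *
                V (t + 1) (upd a t (al, af)) xf')}
      = sSup {r : ℝ | ∃ σf : ℕ → (ℕ → Al × Af) → (ℕ → Xf) → Af → ℝ,
          (∀ n a' xfh', (∀ af, 0 ≤ σf n a' xfh' af) ∧ ∑ af, σf n a' xfh' af = 1) ∧
          r = ∑ xl, μ t a xl *
            rtgFd (fun n a' xl al => if n = t then γl xl al else σtl n a' xl al)
              σf Ql Qf Rf δ (T - t) t a xfh xl} := by
  have hleader : (fun n a' xl al => if n = t then γl xl al else σtl n a' xl al) =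
      upd σtl t fun _ => γl := by
    funext n a' xl al
    unfold upd
    split_ifs <;> rfl
  rw [hleader, show T - t = T - (t + 1) + 1 by omega]
  have hvalue (σf : ℕ → (ℕ → Al × Af) → (ℕ → Xf) → Af → ℝ) :=
    sum_mul_rtgFd_upd_eq_stageObjective σtl γl σf (μ t a) (fun u => μ (t + 1) (upd a t u))
      (T - (t + 1)) t a xfh (hind σf)
  have hV : ∀ u xf', ∑ xl', μ (t + 1) (upd a t u) xl' *
      rtgFd σtl σtf Ql Qf Rf δ (T - (t + 1)) (t + 1) (upd a t u) (upd xfh (t + 1) xf') xl' =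
        V (t + 1) (upd a t u) xf' := fun u xf' => by
    simpa only [upd_self] using (hval (upd a t u) (upd xfh (t + 1) xf')).symm
  apply csSup_eq_csSup_of_forall_exists_le
  · rintro _ ⟨q, hq, rfl⟩
    set σq := upd σtf t fun _ _ => q
    have hcont : rtgFd σtl σq Ql Qf Rf δ (T - (t + 1)) (t + 1) =
        rtgFd σtl σtf Ql Qf Rf δ (T - (t + 1)) (t + 1) :=
      rtgFd_congr _ (fun _ _ => rfl) fun m hm => upd_of_ne σtf _ (by omega)
    refine ⟨_, ⟨σq, upd_const_mem_stdSimplex hσtf hq t, rfl⟩, le_of_eq ?_⟩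
    rw [hvalue, hcont]
    simp only [hV, σq, upd_self]
    rfl
  · rintro _ ⟨σf, hσf, rfl⟩
    refine ⟨_, ⟨σf t a xfh, hσf t a xfh, rfl⟩, ?_⟩
    rw [hvalue]
    exact stageObjective_mono (W' := fun u xf' => V (t + 1) (upd a t u) xf') _ (hμ t a).1
      (fun xl => (hγl xl).1) (fun u => (hQf _ u).1) hδ0 (hσf t a xfh).1
      fun u xf' => (hopt σf hσf _ _).trans_eq (hV u xf')

/-- the follower's one-stage optimization over type-dependent prescriptions
(with the backward-recursion continuation value) achieves the same optimum as the full
dynamic optimization over all history-dependent continuation strategies, given the leader's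
time-`t` prescription `γl` embedded in the equilibrium leader strategy `σtl` at all other
times.  Hypotheses: `hval` is the value identity (Lemma 1) linking `V_{t+1}` to the
equilibrium reward-to-go, `hind` is strategy-independence of continuation measures (Lemma 3,
multiplicative form), and `hopt` is sequential optimality of the equilibrium follower
strategy `σtf` from time `t+1` on. -/
theorem prescription_value_equals_strategy_value
    {Xl Xf Al Af : Type} [Fintype Xl] [Fintype Xf] [Fintype Al] [Fintype Af] [Nonempty Af]
    (T t : ℕ) (ht : t < T)
    (σtl : ℕ → (ℕ → Al × Af) → Xl → Al → ℝ)
    (σtf : ℕ → (ℕ → Al × Af) → (ℕ → Xf) → Af → ℝ)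
    (γl : Xl → Al → ℝ)
    (Ql : Xl → Al × Af → Xl → ℝ) (Qf : Xf → Al × Af → Xf → ℝ)
    (Rf : ℕ → Xl × Xf → Al × Af → ℝ) (δ : ℝ) (hδ0 : 0 ≤ δ) (hδ1 : δ ≤ 1)
    (μ : ℕ → (ℕ → Al × Af) → Xl → ℝ)
    (V : ℕ → (ℕ → Al × Af) → Xf → ℝ)
    (a : ℕ → Al × Af) (xfh : ℕ → Xf)
    -- probability hypotheses
    (hμ : ∀ n a', (∀ xl, 0 ≤ μ n a' xl) ∧ ∑ xl, μ n a' xl = 1)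
    (hσtl : ∀ n a' xl, (∀ al, 0 ≤ σtl n a' xl al) ∧ ∑ al, σtl n a' xl al = 1)
    (hσtf : ∀ n a' xfh', (∀ af, 0 ≤ σtf n a' xfh' af) ∧ ∑ af, σtf n a' xfh' af = 1)
    (hγl : ∀ xl, (∀ al, 0 ≤ γl xl al) ∧ ∑ al, γl xl al = 1)
    (hQl : ∀ x u, (∀ x', 0 ≤ Ql x u x') ∧ ∑ x', Ql x u x' = 1)
    (hQf : ∀ x u, (∀ x', 0 ≤ Qf x u x') ∧ ∑ x', Qf x u x' = 1)
    -- Lemma 1: V_{t+1} equals the equilibrium reward-to-go restarted from μ_{t+1}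
    (hval : ∀ (a' : ℕ → Al × Af) (xfh' : ℕ → Xf),
      V (t + 1) a' (xfh' (t + 1))
        = ∑ xl', μ (t + 1) a' xl' *
            rtgFd σtl σtf Ql Qf Rf δ (T - (t + 1)) (t + 1) a' xfh' xl')
    -- Lemma 3: strategy-independence / belief consistency at time t (multiplicative form)
    (hind : ∀ (σf : ℕ → (ℕ → Al × Af) → (ℕ → Xf) → Af → ℝ) (al : Al) (af : Af)
        (xf' : Xf),
      (∑ xl, ∑ xl', μ t a xl * γl xl al * Ql xl (al, af) xl' *
          rtgFd σtl σf Ql Qf Rf δ (T - (t + 1)) (t + 1)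
            (upd a t (al, af)) (upd xfh (t + 1) xf') xl')
        = (∑ xl, μ t a xl * γl xl al) *
          ∑ xl', μ (t + 1) (upd a t (al, af)) xl' *
            rtgFd σtl σf Ql Qf Rf δ (T - (t + 1)) (t + 1)
              (upd a t (al, af)) (upd xfh (t + 1) xf') xl')
    -- the equilibrium follower strategy is optimal from time t+1 on
    (hopt : ∀ (σf : ℕ → (ℕ → Al × Af) → (ℕ → Xf) → Af → ℝ),
      (∀ n a' xfh', (∀ af, 0 ≤ σf n a' xfh' af) ∧ ∑ af, σf n a' xfh' af = 1) →
      ∀ (a' : ℕ → Al × Af) (xfh' : ℕ → Xf),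
        (∑ xl', μ (t + 1) a' xl' *
            rtgFd σtl σf Ql Qf Rf δ (T - (t + 1)) (t + 1) a' xfh' xl')
          ≤ ∑ xl', μ (t + 1) a' xl' *
              rtgFd σtl σtf Ql Qf Rf δ (T - (t + 1)) (t + 1) a' xfh' xl') :
    -- conclusion: the two optima coincide
    sSup {r : ℝ | ∃ q : Af → ℝ, ((∀ af, 0 ≤ q af) ∧ ∑ af, q af = 1) ∧
        r = ∑ xl : Xl, ∑ al : Al, ∑ af : Af,
          μ t a xl * γl xl al * q af *
            (Rf t (xl, xfh t) (al, af) +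
              δ * ∑ xf' : Xf, Qf (xfh t) (al, af) xf' *
                V (t + 1) (upd a t (al, af)) xf')}
      = sSup {r : ℝ | ∃ σf : ℕ → (ℕ → Al × Af) → (ℕ → Xf) → Af → ℝ,
          (∀ n a' xfh', (∀ af, 0 ≤ σf n a' xfh' af) ∧ ∑ af, σf n a' xfh' af = 1) ∧
          r = ∑ xl, μ t a xl *
            rtgFd (fun n a' xl al => if n = t then γl xl al else σtl n a' xl al)
              σf Ql Qf Rf δ (T - t) t a xfh xl} :=
  prescription_value_equals_strategy_value_general T t ht σtl σtf γl Ql Qf Rf δ hδ0 μ V a xfh hμ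
    hσtf hγl hQf hval hind hopt

end
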